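/- arXiv:1809.04464 — 2 statements merged into one kernel-verified Lean document; each statement's English description precedes it below -/
import Mathlib

section
/- Let b ∈ (0,∞) and let Z_1, …, Z_N be independent real-valued random variables on a probability space, each taking values in the interval [−b, b]. Then for every μ > 0 there exists a real number α with 0 < α ≤ min{1, (b/2)·e^{−2b}} such that P( (1/N)·Σ_{i=1}^N (Z_i − E[Z_i]) ≥ μ ) ≤ exp( −(α·μ + α²·b²)·N ). -/
open MeasureTheory ProbabilityTheory

/-!
By Hoeffding's lemma each centred variable `Z i - E[Z i]` is sub-Gaussian with variance proxy
`b²`, so by independence their sum is sub-Gaussian with proxy `N b²`, and the Chernoff bound gives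
`P(mean ≥ μ) ≤ exp(-N μ² / (2 b²))`. Any `α ≤ μ / (2b)²` satisfies `α μ + α² b² ≤ μ² / (2 b²)`,
so `α` can also be taken below `min 1 ((b/2) e^{-2b})`.
-/

theorem measureReal_le_mean_sub_integral_le {Ω ι : Type*} [MeasurableSpace Ω] {P : Measure Ω}
    [Fintype ι] {X : ι → Ω → ℝ} (hX : ∀ i, AEMeasurable (X i) P)
    (hindep : iIndepFun X P) {a b : ℝ} (hab : ∀ i, ∀ᵐ ω ∂P, X i ω ∈ Set.Icc a b)
    {ε : ℝ} (hε : 0 ≤ ε) :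
    P.real {ω | ε ≤ (Fintype.card ι : ℝ)⁻¹ * ∑ i, (X i ω - P[X i])} ≤
      Real.exp (-2 * Fintype.card ι * ε ^ 2 / (b - a) ^ 2) := by
  have : IsProbabilityMeasure P := hindep.isProbabilityMeasure
  rcases isEmpty_or_nonempty ι with _ | _
  · simp [measureReal_le_one]
  set n : ℝ := (Fintype.card ι : ℝ)
  have hn : 0 < n := by positivity
  have hcentred : iIndepFun (fun i ω ↦ X i ω - P[X i]) P :=
    hindep.comp (g := fun i (y : ℝ) ↦ y - ∫ ω, X i ω ∂P) fun _ ↦ measurable_id.sub_const _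
  have hsum := (HasSubgaussianMGF.sum_of_iIndepFun hcentred (s := Finset.univ)
    fun i _ ↦ hasSubgaussianMGF_of_mem_Icc (hX i) (hab i)).measure_ge_le (ε := n * ε) (by positivity)
  have hevent : {ω | ε ≤ n⁻¹ * ∑ i, (X i ω - P[X i])} = {ω | n * ε ≤ ∑ i, (X i ω - P[X i])} := by
    ext ω
    simp only [Set.mem_ofPred_eq, inv_mul_eq_div, le_div_iff₀ hn, mul_comm ε]
  rw [hevent]
  convert hsum using 2
  push_cast
  rw [Finset.sum_const, Finset.card_univ, nsmul_eq_mul, Real.norm_eq_abs, div_pow, sq_abs]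
  rcases eq_or_ne (b - a) 0 with hba | hba
  · simp [hba]
  · field_simp
    ring

lemma mul_add_sq_mul_sq_le_of_le_div {α μ b : ℝ} (hα : 0 ≤ α) (hαμ : α ≤ μ / (2 * b) ^ 2) :
    α * μ + α ^ 2 * b ^ 2 ≤ 2 * μ ^ 2 / (2 * b) ^ 2 := by
  rcases eq_or_ne b 0 with rfl | hb
  · obtain rfl : α = 0 := le_antisymm (by simpa using hαμ) hα
    simp
  have hb2 : 0 < (2 * b) ^ 2 := by positivity
  rw [le_div_iff₀ hb2] at hαμ ⊢
  have hμ : 0 ≤ μ := hαμ.trans' (by positivity)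
  nlinarith [mul_le_mul_of_nonneg_left hαμ hμ, mul_le_mul hαμ hαμ (by positivity) hμ]

theorem stmt0_general
    {Ω : Type*} [MeasurableSpace Ω] (P : Measure Ω) [IsProbabilityMeasure P]
    (b : ℝ) (hb : 0 < b) (N : ℕ)
    (Z : Fin N → Ω → ℝ)
    (hmeas : ∀ i, Measurable (Z i))
    (hindep : iIndepFun Z P)
    (hbdd : ∀ i ω, Z i ω ∈ Set.Icc (-b) b) :
    ∀ μ : ℝ, 0 < μ →
      ∃ α : ℝ, 0 < α ∧ α ≤ min 1 (b / 2 * Real.exp (-2 * b)) ∧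
        P {ω | μ ≤ (1 / (N : ℝ)) * ∑ i, (Z i ω - ∫ ω', Z i ω' ∂P)} ≤
          ENNReal.ofReal (Real.exp (-(α * μ + α ^ 2 * b ^ 2) * N)) := by
  intro μ hμ
  set α := min (min 1 (b / 2 * Real.exp (-2 * b))) (μ / (2 * b) ^ 2)
  have hα : 0 < α := lt_min (lt_min one_pos (by positivity)) (by positivity)
  refine ⟨α, hα, min_le_left _ _, ?_⟩
  have hoeffding := measureReal_le_mean_sub_integral_le (fun i ↦ (hmeas i).aemeasurable) hindep
    (fun i ↦ ae_of_all _ (hbdd i)) hμ.le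
  rw [Fintype.card_fin, sub_neg_eq_add, ← two_mul] at hoeffding
  rw [one_div, ← ofReal_measureReal]
  refine ENNReal.ofReal_le_ofReal (hoeffding.trans (Real.exp_le_exp.2 ?_))
  calc -2 * N * μ ^ 2 / (2 * b) ^ 2 = -(2 * μ ^ 2 / (2 * b) ^ 2) * N := by ring
    _ ≤ -(α * μ + α ^ 2 * b ^ 2) * N := by
      gcongr
      exact mul_add_sq_mul_sq_le_of_le_div hα.le (min_le_right _ _)

/-- Bernstein-type inequality, Lemma from Ahlswede 1980:
For independent random variables `Z i` taking values in `[-b, b]`, for every `μ > 0`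
there exists `α` with `0 < α ≤ min {1, (b/2)·e^{-2b}}` such that
`P((1/N)·Σ (Z i - E[Z i]) ≥ μ) ≤ exp(-(αμ + α²b²)·N)`. -/
theorem stmt0
    {Ω : Type*} [MeasurableSpace Ω] (P : Measure Ω) [IsProbabilityMeasure P]
    (b : ℝ) (hb : 0 < b) (N : ℕ) (hN : 0 < N)
    (Z : Fin N → Ω → ℝ)
    (hmeas : ∀ i, Measurable (Z i))
    (hindep : iIndepFun Z P)
    (hbdd : ∀ i ω, Z i ω ∈ Set.Icc (-b) b) :
    ∀ μ : ℝ, 0 < μ →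
      ∃ α : ℝ, 0 < α ∧ α ≤ min 1 (b / 2 * Real.exp (-2 * b)) ∧
        P {ω | μ ≤ (1 / (N : ℝ)) * ∑ i, (Z i ω - ∫ ω', Z i ω' ∂P)} ≤
          ENNReal.ofReal (Real.exp (-(α * μ + α ^ 2 * b ^ 2) * N)) :=
  stmt0_general P b hb N Z hmeas hindep hbdd
end

section
/- (Conditional typicality lemma.) Let 𝒮 and 𝒯 be finite alphabets, P_S a probability distribution on 𝒮, W : 𝒮 → 𝒫(𝒯) a channel (conditional probability distribution) with values W(t|s), and δ_0 ∈ (0, 1]. Let n be a positive integer, let s ∈ 𝒮^n satisfy ‖T_s − P_S‖_∞ ≤ δ_0, and let T = (T_1, …, T_n) be independent random variables with T_i distributed according to W(·|s_i). Then P( (s, T) ∈ T^n_{3δ_0}(P_S·W) ) ≥ 1 − 2·|𝒮|·|𝒯|·exp(−2nδ_0³), where (P_S·W)(a,t) := P_S(a)·W(t|a). -/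
open MeasureTheory ProbabilityTheory

/-! For a fixed pair `(a, t)`, the number of indices `i` with `s i = a` and `T i = t` is a sum of
independent `[0, 1]`-valued indicators with mean `n · T_s(a) · W(t|a)`, so by Hoeffding's inequality
it deviates from that mean by at least `2nδ₀` with probability at most `2 exp(-8nδ₀²)`. Off this
event the joint type at `(a, t)` is within `2δ₀` of `T_s(a) W(t|a)`, hence within `3δ₀` of
`P_S(a) W(t|a)`; a union bound over the `|𝒮| |𝒯|` pairs concludes. -/

/-- The type (empirical distribution) of a sequence `s ∈ 𝒮^n`:
`T_s(a) = (1/n)·|{i : s i = a}|`. -/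
noncomputable def empDist {n : ℕ} {S : Type*} [DecidableEq S]
    (s : Fin n → S) (a : S) : ℝ :=
  (Finset.univ.filter (fun i => s i = a)).card / n

/-- The joint type of a pair of sequences `(s, t) ∈ 𝒮^n × 𝒯^n`:
`T_{s,t}(a,b) = (1/n)·|{i : (s i, t i) = (a, b)}|`. -/
noncomputable def empDist2 {n : ℕ} {S T : Type*} [DecidableEq S] [DecidableEq T]
    (s : Fin n → S) (t : Fin n → T) (a : S) (b : T) : ℝ :=
  (Finset.univ.filter (fun i => s i = a ∧ t i = b)).card / n

open Finset Real

lemma measureReal_abs_sum_ge_le_of_iIndepFun {Ω ι : Type*} [MeasurableSpace Ω]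
    {μ : Measure Ω} {X : ι → Ω → ℝ} (hindep : iIndepFun X μ)
    (hmeas : ∀ i, AEMeasurable (X i) μ) (hX : ∀ i, ∀ᵐ ω ∂μ, X i ω ∈ Set.Icc 0 1)
    (s : Finset ι) {ε : ℝ} (hε : 0 ≤ ε) :
    μ.real {ω | ε ≤ |∑ i ∈ s, (X i ω - μ[X i])|} ≤ 2 * exp (-2 * ε ^ 2 / #s) := by
  have := hindep.isProbabilityMeasure
  have hsum :
      HasSubgaussianMGF (fun ω => ∑ i ∈ s, (X i ω - μ[X i])) (∑ i ∈ s, (1 / 4)) μ := by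
    refine HasSubgaussianMGF.sum_of_iIndepFun
      (hindep.comp (fun i x => x - μ[X i]) fun i => by fun_prop) fun i _ => ?_
    convert hasSubgaussianMGF_of_mem_Icc (hmeas i) (hX i) using 1
    · rfl
    · rw [sub_zero, nnnorm_one]
      norm_num
  have hexp : exp (-ε ^ 2 / (2 * ((∑ i ∈ s, (1 / 4 : NNReal) : NNReal) : ℝ))) =
      exp (-2 * ε ^ 2 / #s) := by
    congr 1
    push_cast
    rw [sum_const, nsmul_eq_mul]
    ring
  calc μ.real {ω | ε ≤ |∑ i ∈ s, (X i ω - μ[X i])|}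
      ≤ μ.real ({ω | ε ≤ ∑ i ∈ s, (X i ω - μ[X i])} ∪
          {ω | ε ≤ -∑ i ∈ s, (X i ω - μ[X i])}) :=
        measureReal_mono fun _ h => le_abs.1 (Set.mem_ofPred.1 h)
    _ ≤ _ := measureReal_union_le _ _
    _ ≤ 2 * exp (-2 * ε ^ 2 / #s) := by
        rw [two_mul, ← hexp]
        exact add_le_add (hsum.measure_ge_le hε) (hsum.neg.measure_ge_le hε)

lemma natCast_mul_empDist {n : ℕ} {S : Type*} [DecidableEq S] (s : Fin n → S) (a : S) :
    n * empDist s a = #{i | s i = a} := by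
  rcases n.eq_zero_or_pos with rfl | hn
  · simp
  · rw [empDist, mul_div_cancel₀ _ (by positivity)]

lemma natCast_mul_empDist2 {n : ℕ} {S T : Type*} [DecidableEq S] [DecidableEq T]
    (s : Fin n → S) (t : Fin n → T) (a : S) (b : T) :
    n * empDist2 s t a b = #{i | s i = a ∧ t i = b} := by
  rcases n.eq_zero_or_pos with rfl | hn
  · simp
  · rw [empDist2, mul_div_cancel₀ _ (by positivity)]

lemma lt_abs_sub_mul_of_abs_sub_le {x y q p δ : ℝ} (hy : |y - q| ≤ δ) (hp0 : 0 ≤ p)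
    (hp1 : p ≤ 1) (h : 3 * δ < |x - q * p|) : 2 * δ < |x - y * p| := by
  have hyq : |y * p - q * p| ≤ δ := by
    rw [← sub_mul, abs_mul, abs_of_nonneg hp0]
    nlinarith [abs_nonneg (y - q)]
  linarith [abs_sub_le x (y * p) (q * p)]

lemma neg_two_mul_sq_div_le (n : ℕ) {δ : ℝ} (hδ1 : δ ≤ 1) :
    -2 * (2 * n * δ) ^ 2 / n ≤ -2 * n * δ ^ 3 := by
  rcases n.eq_zero_or_pos with rfl | hn
  · simp
  · rw [div_le_iff₀ (by positivity)]
    have : δ ^ 3 ≤ 4 * δ ^ 2 := by nlinarith [mul_le_mul_of_nonneg_left hδ1 (sq_nonneg δ)]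
    nlinarith [mul_le_mul_of_nonneg_left this (sq_nonneg (n : ℝ))]

lemma one_sub_sum_measureReal_le_of_compl_subset {Ω ι : Type*} [MeasurableSpace Ω]
    {P : Measure Ω} [IsProbabilityMeasure P] [Fintype ι] {G : Set Ω} {B : ι → Set Ω}
    (h : Gᶜ ⊆ ⋃ i, B i) : 1 - ∑ i, P.real (B i) ≤ P.real G := by
  have hunion := measureReal_union_le (μ := P) G Gᶜ
  rw [Set.union_compl_self, probReal_univ] at hunion
  linarith [(measureReal_mono (μ := P) h).trans (measureReal_iUnion_fintype_le B)]

lemma measureReal_abs_empDist2_sub_gt_le {Ω 𝒮 𝒯 : Type*} [MeasurableSpace Ω] {P : Measure Ω}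
    [DecidableEq 𝒮] [DecidableEq 𝒯] [MeasurableSpace 𝒯] [MeasurableSingletonClass 𝒯]
    {n : ℕ} {s : Fin n → 𝒮} {T : Fin n → Ω → 𝒯} (hmeas : ∀ i, Measurable (T i))
    (hindep : iIndepFun T P) {a : 𝒮} {t : 𝒯} {p q δ : ℝ} (hp0 : 0 ≤ p) (hp1 : p ≤ 1)
    (hlaw : ∀ i, s i = a → P {ω | T i ω = t} = ENNReal.ofReal p)
    (hq : |empDist s a - q| ≤ δ) (hδ1 : δ ≤ 1) :
    P.real {ω | 3 * δ < |empDist2 s (fun i => T i ω) a t - q * p|} ≤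
      2 * exp (-2 * n * δ ^ 3) := by
  have := hindep.isProbabilityMeasure
  have hδ : 0 ≤ δ := (abs_nonneg _).trans hq
  set g : Fin n → 𝒯 → ℝ := fun i b => if s i = a ∧ b = t then 1 else 0
  have hg : ∀ i, Measurable (g i) := fun i =>
    Measurable.ite ((MeasurableSet.const _).inter (measurableSet_singleton t))
      measurable_const measurable_const
  set Z : Fin n → Ω → ℝ := fun i => g i ∘ T i
  have hZ_indep : iIndepFun Z P := hindep.comp g hg
  have hZ_integral : ∀ i, P[Z i] = if s i = a then p else 0 := by
    intro i
    by_cases h : s i = a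
    · have hind : Z i = (T i ⁻¹' {t}).indicator 1 := by
        ext ω
        simp only [Z, g, Function.comp_apply, h, true_and, Set.indicator, Set.mem_preimage,
          Set.mem_singleton_iff, Pi.one_apply]
      rw [hind, integral_indicator_one ((hmeas i) (measurableSet_singleton t)), if_pos h]
      exact (congrArg ENNReal.toReal (hlaw i h)).trans (ENNReal.toReal_ofReal hp0)
    · simp only [Z, g, Function.comp_apply, h, false_and, if_false, integral_zero]
  have hdev : ∀ ω, ∑ i, (Z i ω - P[Z i]) =
      n * (empDist2 s (fun i => T i ω) a t - empDist s a * p) := by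
    intro ω
    rw [sum_sub_distrib, mul_sub, natCast_mul_empDist2, ← mul_assoc, natCast_mul_empDist,
      natCast_card_filter, natCast_card_filter, sum_mul]
    simp_rw [hZ_integral, Z, g, Function.comp_apply, ite_mul, one_mul, zero_mul]
  calc P.real {ω | 3 * δ < |empDist2 s (fun i => T i ω) a t - q * p|}
      ≤ P.real {ω | 2 * n * δ ≤ |∑ i, (Z i ω - P[Z i])|} := by
        refine measureReal_mono fun ω hω => ?_
        have := lt_abs_sub_mul_of_abs_sub_le hq hp0 hp1 hω
        rw [Set.mem_ofPred, hdev, abs_mul, Nat.abs_cast]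
        nlinarith [mul_le_mul_of_nonneg_left this.le (Nat.cast_nonneg (α := ℝ) n)]
    _ ≤ 2 * exp (-2 * (2 * n * δ) ^ 2 / #(univ : Finset (Fin n))) :=
        measureReal_abs_sum_ge_le_of_iIndepFun hZ_indep
          (fun i => ((hg i).comp (hmeas i)).aemeasurable)
          (fun i => ae_of_all _ fun ω => by
            simp only [Z, g, Function.comp_apply]
            split_ifs <;> simp)
          _ (by positivity)
    _ ≤ 2 * exp (-2 * n * δ ^ 3) := by
        rw [card_univ, Fintype.card_fin]
        gcongr
        exact neg_two_mul_sq_div_le n hδ1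

theorem stmt5_general
    {Ω : Type*} [MeasurableSpace Ω] (P : Measure Ω) [IsProbabilityMeasure P]
    {𝒮 𝒯 : Type*} [Fintype 𝒮] [DecidableEq 𝒮] [Fintype 𝒯] [DecidableEq 𝒯]
    [MeasurableSpace 𝒯] [MeasurableSingletonClass 𝒯]
    (PS : 𝒮 → ℝ)
    (W : 𝒮 → 𝒯 → ℝ) (hW0 : ∀ a t, 0 ≤ W a t) (hW1 : ∀ a, ∑ t, W a t = 1)
    (δ0 : ℝ) (hδ0' : δ0 ≤ 1)
    (n : ℕ)
    (s : Fin n → 𝒮) (hs : ∀ a : 𝒮, |empDist s a - PS a| ≤ δ0)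
    (T : Fin n → Ω → 𝒯)
    (hmeas : ∀ i, Measurable (T i))
    (hindep : iIndepFun T P)
    (hlaw : ∀ i t, P {ω | T i ω = t} = ENNReal.ofReal (W (s i) t)) :
    ENNReal.ofReal
        (1 - 2 * (Fintype.card 𝒮 : ℝ) * (Fintype.card 𝒯 : ℝ) * Real.exp (-2 * n * δ0 ^ 3)) ≤
      P {ω | ∀ (a : 𝒮) (t : 𝒯),
        |empDist2 s (fun i => T i ω) a t - PS a * W a t| ≤ 3 * δ0} := by
  set far : 𝒮 × 𝒯 → Set Ω := fun x =>
    {ω | 3 * δ0 < |empDist2 s (fun i => T i ω) x.1 x.2 - PS x.1 * W x.1 x.2|}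
  have hfar : ∀ x, P.real (far x) ≤ 2 * exp (-2 * n * δ0 ^ 3) := fun ⟨a, t⟩ =>
    measureReal_abs_empDist2_sub_gt_le hmeas hindep (hW0 a t)
      (hW1 a ▸ single_le_sum (fun b _ => hW0 a b) (mem_univ t))
      (fun i hi => hi ▸ hlaw i t) (hs a) hδ0'
  have hgood := one_sub_sum_measureReal_le_of_compl_subset (P := P) (B := far)
    (G := {ω | ∀ a t, |empDist2 s (fun i => T i ω) a t - PS a * W a t| ≤ 3 * δ0})
    fun ω hω => by simpa [far] using hω
  rw [← ofReal_measureReal]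
  refine ENNReal.ofReal_le_ofReal (le_trans ?_ hgood)
  calc 1 - 2 * (Fintype.card 𝒮 : ℝ) * (Fintype.card 𝒯 : ℝ) * exp (-2 * n * δ0 ^ 3)
      = 1 - ∑ _x : 𝒮 × 𝒯, 2 * exp (-2 * n * δ0 ^ 3) := by
        rw [sum_const, card_univ, Fintype.card_prod, nsmul_eq_mul]
        push_cast
        ring
    _ ≤ 1 - ∑ x, P.real (far x) := by gcongr with x; exact hfar x

/-- Conditional typicality lemma: if `s ∈ T^n_{δ₀}(P_S)` and
`T = (T_1, …, T_n)` are independent with `T_i ~ W(·|s_i)`, then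
`P((s, T) ∈ T^n_{3δ₀}(P_S·W)) ≥ 1 - 2·|𝒮|·|𝒯|·exp(-2nδ₀³)`. -/
theorem stmt5
    {Ω : Type*} [MeasurableSpace Ω] (P : Measure Ω) [IsProbabilityMeasure P]
    {𝒮 𝒯 : Type*} [Fintype 𝒮] [DecidableEq 𝒮] [Fintype 𝒯] [DecidableEq 𝒯]
    [MeasurableSpace 𝒯] [MeasurableSingletonClass 𝒯]
    (PS : 𝒮 → ℝ) (hPS0 : ∀ a, 0 ≤ PS a) (hPS1 : ∑ a, PS a = 1)
    (W : 𝒮 → 𝒯 → ℝ) (hW0 : ∀ a t, 0 ≤ W a t) (hW1 : ∀ a, ∑ t, W a t = 1)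
    (δ0 : ℝ) (hδ0 : 0 < δ0) (hδ0' : δ0 ≤ 1)
    (n : ℕ) (hn : 0 < n)
    (s : Fin n → 𝒮) (hs : ∀ a : 𝒮, |empDist s a - PS a| ≤ δ0)
    (T : Fin n → Ω → 𝒯)
    (hmeas : ∀ i, Measurable (T i))
    (hindep : iIndepFun T P)
    (hlaw : ∀ i t, P {ω | T i ω = t} = ENNReal.ofReal (W (s i) t)) :
    ENNReal.ofReal
        (1 - 2 * (Fintype.card 𝒮 : ℝ) * (Fintype.card 𝒯 : ℝ) * Real.exp (-2 * n * δ0 ^ 3)) ≤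
      P {ω | ∀ (a : 𝒮) (t : 𝒯),
        |empDist2 s (fun i => T i ω) a t - PS a * W a t| ≤ 3 * δ0} :=
  stmt5_general P PS W hW0 hW1 δ0 hδ0' n s hs T hmeas hindep hlaw
end
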